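/- arXiv:1408.0675 — 6 statements merged into one kernel-verified Lean document; each statement's English description precedes it below -/
import Mathlib

section
/- Let b, β, c, γ be real numbers with b ≠ 0 and β ≠ 0, assume c − γ ≥ 0 and D := (c − γ)² + 4bβ > 0, and set χ₊ := (sgn β)·((c−γ) + √D)/(2|b|) and χ₋ := (sgn β)·((c−γ) − √D)/(2|b|). Then: (visible case) if b > 0 and β > 0 then χ₋ < 0 < χ₊; (visible-invisible cases) if b > 0 and β < 0 then χ₊ < χ₋ < 0, and if b < 0 and β > 0 then 0 < χ₋ < χ₊; (invisible case) if b < 0 and β < 0 then χ₊ < 0 < χ₋. -/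
/-! When `b β > 0` the discriminant exceeds `(c - γ)²`, so `√D > c - γ` and the two numerators
`(c - γ) ± √D` have opposite signs; when `b β < 0` we have `0 < √D < c - γ`, so both
numerators are positive and ordered. Multiplying by `sgn β` and dividing by `2|b| > 0` gives
the four cases. -/

namespace Real

theorem lt_sqrt_sq_add_of_pos {d e : ℝ} (hd : 0 ≤ d) (he : 0 < e) : d < √(d ^ 2 + e) :=
  (lt_sqrt hd).mpr (by linarith)

theorem sqrt_sq_add_lt_of_neg {d e : ℝ} (hd : 0 ≤ d) (hde : 0 ≤ d ^ 2 + e) (he : e < 0) :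
    √(d ^ 2 + e) < d := by
  simpa only [sqrt_sq hd] using sqrt_lt_sqrt hde (by linarith : d ^ 2 + e < d ^ 2)

end Real

theorem stmt_5_general (b β c γ : ℝ) (hcγ : 0 ≤ c - γ)
    (D : ℝ) (hD : D = (c - γ) ^ 2 + 4 * b * β) (hDpos : 0 < D)
    (χp χm : ℝ)
    (hχp : χp = Real.sign β * ((c - γ) + Real.sqrt D) / (2 * |b|))
    (hχm : χm = Real.sign β * ((c - γ) - Real.sqrt D) / (2 * |b|)) :
    (0 < b → 0 < β → χm < 0 ∧ 0 < χp) ∧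
    (0 < b → β < 0 → χp < χm ∧ χm < 0) ∧
    (b < 0 → 0 < β → 0 < χm ∧ χm < χp) ∧
    (b < 0 → β < 0 → χp < 0 ∧ 0 < χm) := by
  have hr : 0 < √D := Real.sqrt_pos.mpr hDpos
  have hm (hb : b ≠ 0) : 0 < 2 * |b| := by positivity
  have hgt (he : 0 < 4 * b * β) : c - γ < √D := hD ▸ Real.lt_sqrt_sq_add_of_pos hcγ he
  have hlt (he : 4 * b * β < 0) : √D < c - γ :=
    hD ▸ Real.sqrt_sq_add_lt_of_neg hcγ (hD ▸ hDpos.le) he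
  subst hχp hχm
  refine ⟨fun hb hβ => ?_, fun hb hβ => ?_, fun hb hβ => ?_, fun hb hβ => ?_⟩
  · have := hgt (by positivity)
    rw [Real.sign_of_pos hβ]
    exact ⟨div_neg_of_neg_of_pos (by linarith) (hm hb.ne'), div_pos (by linarith) (hm hb.ne')⟩
  · have := hlt (by nlinarith)
    rw [Real.sign_of_neg hβ]
    exact ⟨div_lt_div_of_pos_right (by linarith) (hm hb.ne'),
      div_neg_of_neg_of_pos (by linarith) (hm hb.ne')⟩
  · have := hlt (by nlinarith)
    rw [Real.sign_of_pos hβ]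
    exact ⟨div_pos (by linarith) (hm hb.ne), div_lt_div_of_pos_right (by linarith) (hm hb.ne)⟩
  · have := hgt (by nlinarith)
    rw [Real.sign_of_neg hβ]
    exact ⟨div_neg_of_neg_of_pos (by linarith) (hm hb.ne), div_pos (by linarith) (hm hb.ne)⟩

/-- Signs of the eigenvector slopes `χ± = sgn(β)·((c-γ) ± √D)/(2|b|)`
(with `c - γ ≥ 0`, `D = (c-γ)² + 4bβ > 0`): visible (`b>0, β>0`): `χ₋ < 0 < χ₊`;
visible-invisible (`b>0, β<0`): `χ₊ < χ₋ < 0`; (`b<0, β>0`): `0 < χ₋ < χ₊`;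
invisible (`b<0, β<0`): `χ₊ < 0 < χ₋`. -/
theorem stmt_5 (b β c γ : ℝ) (hb : b ≠ 0) (hβ : β ≠ 0) (hcγ : 0 ≤ c - γ)
    (D : ℝ) (hD : D = (c - γ) ^ 2 + 4 * b * β) (hDpos : 0 < D)
    (χp χm : ℝ)
    (hχp : χp = Real.sign β * ((c - γ) + Real.sqrt D) / (2 * |b|))
    (hχm : χm = Real.sign β * ((c - γ) - Real.sqrt D) / (2 * |b|)) :
    (0 < b → 0 < β → χm < 0 ∧ 0 < χp) ∧
    (0 < b → β < 0 → χp < χm ∧ χm < 0) ∧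
    (b < 0 → 0 < β → 0 < χm ∧ χm < χp) ∧
    (b < 0 → β < 0 → χp < 0 ∧ 0 < χm) :=
  stmt_5_general b β c γ hcγ D hD hDpos χp χm hχp hχm
end

section
/- Let φ : ℝ → ℝ be a Sotomayor–Teixeira regularization function. Let U ⊆ ℝ² be open and let a⁺, a⁻ : U → ℝ be continuously differentiable with a⁺(p)·a⁻(p) < 0 for all p ∈ U. Then there exists a continuously differentiable function h₀ : U → ℝ such that for every p ∈ U: h₀(p) ∈ (−1, 1) and φ(h₀(p)) = −(a⁺(p) + a⁻(p))/(a⁺(p) − a⁻(p)). In other words, the critical manifold of the regularized system is, over the sliding region, the graph of a C¹ function y = h₀(x,z). -/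
/-- A Sotomayor–Teixeira regularization function: `C¹`, equal to `±1` for `y ≷ ±1`,
valued in `(-1,1)` and strictly increasing (positive derivative) on `(-1,1)`. -/
def STRegularization (φ : ℝ → ℝ) : Prop :=
  ContDiff ℝ 1 φ ∧ (∀ y, 1 ≤ y → φ y = 1) ∧ (∀ y, y ≤ -1 → φ y = -1) ∧
  (∀ y, -1 < y → y < 1 → -1 < φ y ∧ φ y < 1) ∧
  (∀ y, -1 < y → y < 1 → 0 < deriv φ y)

/-!
A regularization function `φ` is strictly increasing on `[-1, 1]` and maps `(-1, 1)` onto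
itself, so it has an inverse `ψ` there, which is `C¹` by the inverse function theorem since
`φ' > 0`.
On the sliding region, `a⁺ a⁻ < 0` forces `|a⁺ + a⁻| < |a⁺ - a⁻|`, so the `C¹` quotient
`-(a⁺ + a⁻)/(a⁺ - a⁻)` lies in `(-1, 1)`, and `h₀ = ψ ∘ (-(a⁺ + a⁻)/(a⁺ - a⁻))` works.
-/

open Set Function Filter Topology

/-- On a neighbourhood of `a` where `f` is injective, `invFunOn` agrees near `f a` with the
local inverse given by the inverse function theorem. -/
theorem ContDiffAt.contDiffAt_invFunOn {𝕂 : Type*} [RCLike 𝕂]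
    {E : Type*} [NormedAddCommGroup E] [NormedSpace 𝕂 E] [CompleteSpace E] [Nonempty E]
    {F : Type*} [NormedAddCommGroup F] [NormedSpace 𝕂 F]
    {f : E → F} {f' : E ≃L[𝕂] F} {a : E} {n : WithTop ℕ∞} {s : Set E}
    (hf : ContDiffAt 𝕂 n f a) (hf' : HasFDerivAt f (f' : E →L[𝕂] F) a) (hn : n ≠ 0)
    (hs : s ∈ 𝓝 a) (hinj : InjOn f s) :
    ContDiffAt 𝕂 n (invFunOn f s) (f a) := by
  set g := hf.localInverse hf' hn
  have hstrict := hf.hasStrictFDerivAt' hf' hn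
  have hg_mem : ∀ᶠ z in 𝓝 (f a), g z ∈ s :=
    hstrict.localInverse_continuousAt.eventually_mem
      (by rwa [hstrict.localInverse_apply_image])
  refine (hf.to_localInverse hf' hn).congr_of_eventuallyEq ?_
  filter_upwards [hstrict.eventually_right_inverse, hg_mem] with z hfg hgs
  calc invFunOn f s z = invFunOn f s (f (g z)) := congrArg _ hfg.symm
    _ = g z := hinj.leftInvOn_invFunOn hgs

namespace STRegularization

variable {φ : ℝ → ℝ}

theorem strictMonoOn_Icc (hφ : STRegularization φ) : StrictMonoOn φ (Icc (-1) 1) := by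
  refine strictMonoOn_of_deriv_pos (convex_Icc _ _) hφ.1.continuous.continuousOn fun x hx => ?_
  rw [interior_Icc] at hx
  exact hφ.2.2.2.2 x hx.1 hx.2

theorem surjOn_Ioo (hφ : STRegularization φ) : SurjOn φ (Ioo (-1) 1) (Ioo (-1) 1) := by
  have := intermediate_value_Ioo (by norm_num : (-1 : ℝ) ≤ 1) hφ.1.continuous.continuousOn
  rwa [hφ.2.2.1 (-1) le_rfl, hφ.2.1 1 le_rfl] at this

theorem contDiffOn_invFunOn (hφ : STRegularization φ) :
    ContDiffOn ℝ 1 (invFunOn φ (Ioo (-1) 1)) (Ioo (-1) 1) := by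
  rintro _ hy
  obtain ⟨x, hx, rfl⟩ := hφ.surjOn_Ioo hy
  have hφ' : HasDerivAt φ (deriv φ x) x :=
    (hφ.1.differentiable one_ne_zero x).hasDerivAt
  refine (ContDiffAt.contDiffAt_invFunOn hφ.1.contDiffAt
    (hφ'.hasFDerivAt_equiv (hφ.2.2.2.2 x hx.1 hx.2).ne') one_ne_zero
    (isOpen_Ioo.mem_nhds hx) ?_).contDiffWithinAt
  exact hφ.strictMonoOn_Icc.injOn.mono Ioo_subset_Icc_self

end STRegularization

theorem sub_ne_zero_of_mul_neg {a b : ℝ} (h : a * b < 0) : a - b ≠ 0 := by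
  intro hab
  rw [sub_eq_zero.mp hab] at h
  exact (mul_self_nonneg b).not_gt h

theorem neg_add_div_sub_mem_Ioo_of_mul_neg {a b : ℝ} (h : a * b < 0) :
    -(a + b) / (a - b) ∈ Ioo (-1) 1 := by
  rw [mem_Ioo, ← abs_lt, abs_div, abs_neg, div_lt_one (abs_pos.mpr (sub_ne_zero_of_mul_neg h))]
  exact sq_lt_sq.mp (by nlinarith)

theorem stmt_9_general (φ : ℝ → ℝ) (hφ : STRegularization φ)
    (U : Set (ℝ × ℝ))
    (ap am : ℝ × ℝ → ℝ) (hap : ContDiffOn ℝ 1 ap U) (ham : ContDiffOn ℝ 1 am U)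
    (hneg : ∀ p ∈ U, ap p * am p < 0) :
    ∃ h₀ : ℝ × ℝ → ℝ, ContDiffOn ℝ 1 h₀ U ∧
      ∀ p ∈ U, -1 < h₀ p ∧ h₀ p < 1 ∧
        φ (h₀ p) = -(ap p + am p) / (ap p - am p) := by
  set g : ℝ × ℝ → ℝ := fun p => -(ap p + am p) / (ap p - am p)
  have hg : ContDiffOn ℝ 1 g U :=
    (hap.add ham).neg.div (hap.sub ham) fun p hp => sub_ne_zero_of_mul_neg (hneg p hp)
  have hg_mem : MapsTo g U (Ioo (-1) 1) := fun p hp =>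
    neg_add_div_sub_mem_Ioo_of_mul_neg (hneg p hp)
  refine ⟨invFunOn φ (Ioo (-1) 1) ∘ g, hφ.contDiffOn_invFunOn.comp hg hg_mem,
    fun p hp => ?_⟩
  obtain ⟨hlow, hup⟩ := hφ.surjOn_Ioo.mapsTo_invFunOn (hg_mem hp)
  exact ⟨hlow, hup, hφ.surjOn_Ioo.rightInvOn_invFunOn (hg_mem hp)⟩

/-- Over an open sliding region `U` (where `a⁺·a⁻ < 0`), the critical
manifold of the regularized system is the graph of a `C¹` function `h₀` with values in
`(-1,1)` satisfying `φ(h₀(p)) = −(a⁺(p)+a⁻(p))/(a⁺(p)−a⁻(p))` on `U`. -/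
theorem stmt_9 (φ : ℝ → ℝ) (hφ : STRegularization φ)
    (U : Set (ℝ × ℝ)) (hU : IsOpen U)
    (ap am : ℝ × ℝ → ℝ) (hap : ContDiffOn ℝ 1 ap U) (ham : ContDiffOn ℝ 1 am U)
    (hneg : ∀ p ∈ U, ap p * am p < 0) :
    ∃ h₀ : ℝ × ℝ → ℝ, ContDiffOn ℝ 1 h₀ U ∧
      ∀ p ∈ U, -1 < h₀ p ∧ h₀ p < 1 ∧
        φ (h₀ p) = -(ap p + am p) / (ap p - am p) :=
  stmt_9_general φ hφ U ap am hap ham hneg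
end

section
/- Let φ : ℝ → ℝ be a Sotomayor–Teixeira regularization function, let b ≠ 0 and β ≠ 0 be real, let g⁺, g⁻ : ℝ² → ℝ be continuous with g⁺(0,0) = 0 and g⁻(0,0) = 0, and set X₂⁺(x,z) = (|b| + g⁺(x,z))·z and X₂⁻(x,z) = (−|β| + g⁻(x,z))·x. Then there exists an open neighborhood U of the origin in ℝ² such that for all (x,z) ∈ U and all y ∈ (−1, 1): if x < 0 and z < 0 then φ′(y)·(X₂⁺(x,z) − X₂⁻(x,z)) < 0, and if x > 0 and z > 0 then φ′(y)·(X₂⁺(x,z) − X₂⁻(x,z)) > 0. (Thus the critical manifold is normally hyperbolic and attracting over the stable sliding region and normally hyperbolic and repelling over the unstable sliding region.) -/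
theorem sub_mul_neg_of_neg_of_neg {p m x z : ℝ} (hp : 0 < p) (hm : m < 0) (hx : x < 0)
    (hz : z < 0) : p * z - m * x < 0 := by
  nlinarith [mul_neg_of_pos_of_neg hp hz, mul_pos_of_neg_of_neg hm hx]

theorem sub_mul_pos_of_pos_of_pos {p m x z : ℝ} (hp : 0 < p) (hm : m < 0) (hx : 0 < x)
    (hz : 0 < z) : 0 < p * z - m * x := by
  nlinarith [mul_pos hp hz, mul_neg_of_neg_of_pos hm hx]

/-- Near the two-fold, with `X₂⁺(x,z) = (|b| + g⁺(x,z))·z` and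
`X₂⁻(x,z) = (−|β| + g⁻(x,z))·x`, for `y ∈ (-1,1)` the quantity
`φ′(y)·(X₂⁺ − X₂⁻)` is negative on the stable sliding quadrant (`x<0, z<0`) and
positive on the unstable sliding quadrant (`x>0, z>0`). -/
theorem stmt_10 (φ : ℝ → ℝ) (hφ : STRegularization φ)
    (b β : ℝ) (hb : b ≠ 0) (hβ : β ≠ 0)
    (gp gm : ℝ × ℝ → ℝ) (hgp : Continuous gp) (hgm : Continuous gm)
    (hgp0 : gp (0, 0) = 0) (hgm0 : gm (0, 0) = 0) :
    ∃ U : Set (ℝ × ℝ), IsOpen U ∧ ((0 : ℝ), (0 : ℝ)) ∈ U ∧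
      ∀ x z : ℝ, (x, z) ∈ U → ∀ y : ℝ, -1 < y → y < 1 →
        (x < 0 → z < 0 →
          deriv φ y * ((|b| + gp (x, z)) * z - (-|β| + gm (x, z)) * x) < 0) ∧
        (x > 0 → z > 0 →
          deriv φ y * ((|b| + gp (x, z)) * z - (-|β| + gm (x, z)) * x) > 0) := by
  obtain ⟨-, -, -, -, hderiv⟩ := hφ
  refine ⟨{q | 0 < |b| + gp q} ∩ {q | -|β| + gm q < 0},
    (isOpen_lt continuous_const (continuous_const.add hgp)).inter
      (isOpen_lt (continuous_const.add hgm) continuous_const), ?_, ?_⟩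
  · simp [hgp0, hgm0, hb, hβ]
  · rintro x z ⟨hp, hm⟩ y hy₁ hy₂
    have hd := hderiv y hy₁ hy₂
    exact ⟨fun hx hz => mul_neg_of_pos_of_neg hd (sub_mul_neg_of_neg_of_neg hp hm hx hz),
      fun hx hz => mul_pos hd (sub_mul_pos_of_pos_of_pos hp hm hx hz)⟩
end

section
/- Let b, β, c, γ be real numbers with b ≠ 0 and β ≠ 0, let f : ℝ → ℝ be any function, and let χ ∈ ℝ satisfy |b|·sgn(β)·χ² − (c − γ)·χ − |β|·sgn(b) = 0. Set λ := −c + |b|·sgn(β)·χ and w₀ := −|b|·χ/|β|. Define F : ℝ³ → ℝ³ by F(x, w, z) = (c/|β| + sgn(β)·w, f(w)·(−|b|·z + |β|·x·w), sgn(b) + (γ/|b|)·w). Then at every point p = (x, w₀, −χ·x) of the line L = {(x, w₀, −χ·x) : x ∈ ℝ} one has F₂(p) = 0, F₃(p) = −χ·F₁(p), and F₁(p) = −λ/|β|; consequently for every x₀ ∈ ℝ the curve ψ(t) = (x₀ − λ·t/|β|, w₀, −χ·(x₀ − λ·t/|β|)) satisfies ψ′(t) = F(ψ(t)) for all t ∈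 ℝ, so L is an invariant line on which the motion is ẋ = −λ/|β|. -/
/-! The line `L` lies in the nullcline `F₂ = 0` because `w₀ = -|b|χ/|β|` makes `|β| x w₀` cancel
`-|b| z` at `z = -χx`, and its direction `(1, 0, -χ)` is parallel to `F` on `L` exactly because `χ`
solves the quadratic. Hence `F` is constant along `L`, equal to `(-λ/|β|, 0, χλ/|β|)`, and the
affine parametrisation of `L` with that velocity is an integral curve. -/

namespace TwoFoldChart

noncomputable def field (b β c γ : ℝ) (f : ℝ → ℝ) (p : ℝ × ℝ × ℝ) : ℝ × ℝ × ℝ :=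
  (c / |β| + Real.sign β * p.2.1, f p.2.1 * (-|b| * p.2.2 + |β| * p.1 * p.2.1),
    Real.sign b + (γ / |b|) * p.2.1)

variable {b β c γ χ lam w₀ : ℝ} {f : ℝ → ℝ}

theorem field_eq_on_line (hb : b ≠ 0) (hβ : β ≠ 0)
    (hχ : |b| * Real.sign β * χ ^ 2 - (c - γ) * χ - |β| * Real.sign b = 0)
    (hlam : lam = -c + |b| * Real.sign β * χ) (hw : w₀ = -|b| * χ / |β|) (x : ℝ) :
    field b β c γ f (x, w₀, -χ * x) = (-lam / |β|, 0, -χ * (-lam / |β|)) := by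
  have hβ' : |β| ≠ 0 := abs_ne_zero.mpr hβ
  have hb' : |b| ≠ 0 := abs_ne_zero.mpr hb
  subst hlam hw
  refine Prod.ext ?_ (Prod.ext ?_ ?_)
  · simp only [field]
    field_simp
    ring
  · simp only [field]
    field_simp
    ring
  · simp only [field]
    field_simp
    linear_combination -hχ

theorem hasDerivAt_line {g : ℝ → ℝ} {g' t : ℝ} (hg : HasDerivAt g g' t) (w₀ χ : ℝ) :
    HasDerivAt (fun s => (g s, w₀, -χ * g s)) (g', 0, -χ * g') t :=
  hg.prodMk ((hasDerivAt_const t w₀).prodMk (hg.const_mul (-χ)))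

end TwoFoldChart

/-- For the blown-up vector field
`F(x,w,z) = (c/|β| + sgn(β)w, f(w)(−|b|z + |β|xw), sgn(b) + (γ/|b|)w)` and a root `χ` of
`|b|·sgn(β)·χ² − (c−γ)χ − |β|·sgn(b) = 0`, with `λ = −c + |b|·sgn(β)·χ` and
`w₀ = −|b|χ/|β|`, along the line `L = {(x, w₀, −χx)}` one has `F₂ = 0`, `F₃ = −χ·F₁`,
`F₁ = −λ/|β|`; consequently `ψ(t) = (x₀ − λt/|β|, w₀, −χ(x₀ − λt/|β|))` solves
`ψ′ = F(ψ)`, so `L` is an invariant line on which the motion is `ẋ = −λ/|β|`. -/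
theorem stmt_12 (b β c γ : ℝ) (hb : b ≠ 0) (hβ : β ≠ 0) (f : ℝ → ℝ)
    (χ : ℝ) (hχ : |b| * Real.sign β * χ ^ 2 - (c - γ) * χ - |β| * Real.sign b = 0)
    (lam w₀ : ℝ) (hlam : lam = -c + |b| * Real.sign β * χ) (hw : w₀ = -|b| * χ / |β|)
    (F : ℝ × ℝ × ℝ → ℝ × ℝ × ℝ)
    (hF : ∀ x w z : ℝ, F (x, w, z) =
      (c / |β| + Real.sign β * w, f w * (-|b| * z + |β| * x * w),
        Real.sign b + (γ / |b|) * w)) :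
    (∀ x : ℝ,
      (F (x, w₀, -χ * x)).2.1 = 0 ∧
      (F (x, w₀, -χ * x)).2.2 = -χ * (F (x, w₀, -χ * x)).1 ∧
      (F (x, w₀, -χ * x)).1 = -lam / |β|) ∧
    (∀ x₀ t : ℝ,
      HasDerivAt
        (fun s : ℝ => ((x₀ - lam * s / |β|, w₀, -χ * (x₀ - lam * s / |β|)) : ℝ × ℝ × ℝ))
        (F (x₀ - lam * t / |β|, w₀, -χ * (x₀ - lam * t / |β|))) t) := by
  obtain rfl : F = TwoFoldChart.field b β c γ f := funext fun p => hF p.1 p.2.1 p.2.2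
  have hL := TwoFoldChart.field_eq_on_line (f := f) hb hβ hχ hlam hw
  refine ⟨fun x => by simp only [hL, and_self], fun x₀ t => ?_⟩
  have hx : HasDerivAt (fun s => x₀ - lam * s / |β|) (-lam / |β|) t := by
    simpa [neg_div] using (((hasDerivAt_id t).const_mul lam).div_const |β|).const_sub x₀
  rw [hL]
  exact TwoFoldChart.hasDerivAt_line hx w₀ χ
end

section
/- Let b, β, c, γ be real numbers with b ≠ 0, β ≠ 0, and D := (c − γ)² + 4bβ > 0. Define G(z) := −|b|·sgn(β)·z + c, P(z) := |b|·sgn(β)·z² − (c − γ)·z − |β|·sgn(b), λ± := −(c+γ)/2 ± √D/2, and χ± := (sgn β)·((c−γ) ± √D)/(2|b|). Then −G(χ₊) = λ₊, −P′(χ₊) = −√D, 2G(χ₊) = −2λ₊, and −G(χ₋) = λ₋, −P′(χ₋) = √D, 2G(χ₋) = −2λ₋. Consequently, for any k ∈ ℝ, the 3×3 matrix with rows (−G(χ±), 0, 0), (k, −P′(χ±), 0), (0, 0, 2G(χ±)) has characteristic polynomial (X − λ±)·(X − μ±)·(X + 2λ±) with μ₊ = −√D and μ₋ = +√D; i.e.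 the eigenvalues of the linearization of the desingularized reduced flow on the blown-up center manifold at the equilibrium p_{a,1,±} = (0, χ±, 0) are (λ±, ∓√D, −2λ±). -/
/-!
At `χ±` one has `|b|·sgn(β)·χ± = ((c − γ) ± √D)/2`, because `sgn(β)² = 1` for `β ≠ 0`.
Substituting this into `G` and into `P′(z) = 2|b|·sgn(β)·z − (c − γ)` gives the three
diagonal entries; the Jacobian is lower triangular, so these are its eigenvalues.
-/

open Polynomial

theorem charpoly_lowerTriangular_fin_three {R : Type*} [CommRing R] (a d e k : R) :
    (!![a, 0, 0; k, d, 0; 0, 0, e] : Matrix (Fin 3) (Fin 3) R).charpoly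
      = (X - C a) * (X - C d) * (X - C e) := by
  rw [Matrix.charpoly, Matrix.det_fin_three]
  simp

theorem deriv_quadratic {𝕜 : Type*} [NontriviallyNormedField 𝕜] (a m x z : 𝕜) :
    deriv (fun z => a * z ^ 2 - m * z - x) z = 2 * a * z - m := by
  have h : HasDerivAt (fun z => a * z ^ 2 - m * z - x) (a * (2 * z ^ 1) - m * 1) z :=
    (((hasDerivAt_pow 2 z).const_mul a).sub ((hasDerivAt_id z).const_mul m)).sub_const x
  rw [h.deriv]
  ring

theorem Real.sign_mul_self_of_ne_zero {r : ℝ} (hr : r ≠ 0) : Real.sign r * Real.sign r = 1 := by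
  rcases Real.sign_apply_eq_of_ne_zero r hr with h | h <;> rw [h] <;> norm_num

theorem abs_mul_sign_mul_sign_mul_div {b β : ℝ} (hb : b ≠ 0) (hβ : β ≠ 0) (s : ℝ) :
    |b| * Real.sign β * (Real.sign β * s / (2 * |b|)) = s / 2 := by
  have hb' : |b| ≠ 0 := abs_ne_zero.mpr hb
  field_simp
  linear_combination s * Real.sign_mul_self_of_ne_zero hβ

theorem neg_G_and_deriv_P_at_equilibrium {b β c γ : ℝ} (hb : b ≠ 0) (hβ : β ≠ 0)
    {G P : ℝ → ℝ} (hG : ∀ z, G z = -|b| * Real.sign β * z + c)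
    (hP : ∀ z, P z = |b| * Real.sign β * z ^ 2 - (c - γ) * z - |β| * Real.sign b) (σ : ℝ) :
    -G (Real.sign β * ((c - γ) + σ) / (2 * |b|)) = -(c + γ) / 2 + σ / 2 ∧
      deriv P (Real.sign β * ((c - γ) + σ) / (2 * |b|)) = σ := by
  set χ := Real.sign β * ((c - γ) + σ) / (2 * |b|)
  have key : |b| * Real.sign β * χ = ((c - γ) + σ) / 2 :=
    abs_mul_sign_mul_sign_mul_div hb hβ ((c - γ) + σ)
  rw [show P = _ from funext hP, deriv_quadratic, hG]
  constructor
  · linear_combination key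
  · linear_combination 2 * key

theorem stmt_13_general (b β c γ : ℝ) (hb : b ≠ 0) (hβ : β ≠ 0)
    (D : ℝ)
    (G P : ℝ → ℝ)
    (hG : ∀ z, G z = -|b| * Real.sign β * z + c)
    (hP : ∀ z, P z = |b| * Real.sign β * z ^ 2 - (c - γ) * z - |β| * Real.sign b)
    (lp lm χp χm : ℝ)
    (hlp : lp = -(c + γ) / 2 + Real.sqrt D / 2)
    (hlm : lm = -(c + γ) / 2 - Real.sqrt D / 2)
    (hχp : χp = Real.sign β * ((c - γ) + Real.sqrt D) / (2 * |b|))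
    (hχm : χm = Real.sign β * ((c - γ) - Real.sqrt D) / (2 * |b|)) :
    (-G χp = lp ∧ -(deriv P χp) = -Real.sqrt D ∧ 2 * G χp = -2 * lp) ∧
    (-G χm = lm ∧ -(deriv P χm) = Real.sqrt D ∧ 2 * G χm = -2 * lm) ∧
    (∀ k : ℝ,
      (!![-G χp, 0, 0; k, -(deriv P χp), 0; 0, 0, 2 * G χp] :
          Matrix (Fin 3) (Fin 3) ℝ).charpoly
        = (X - C lp) * (X - C (-Real.sqrt D)) * (X + C (2 * lp)) ∧
      (!![-G χm, 0, 0; k, -(deriv P χm), 0; 0, 0, 2 * G χm] :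
          Matrix (Fin 3) (Fin 3) ℝ).charpoly
        = (X - C lm) * (X - C (Real.sqrt D)) * (X + C (2 * lm))) := by
  obtain ⟨hGp, hPp⟩ := neg_G_and_deriv_P_at_equilibrium hb hβ hG hP (Real.sqrt D)
  obtain ⟨hGm, hPm⟩ := neg_G_and_deriv_P_at_equilibrium hb hβ hG hP (-Real.sqrt D)
  rw [← hχp] at hGp hPp
  simp only [← sub_eq_add_neg] at hGm hPm
  rw [← hχm] at hGm hPm
  replace hGp : -G χp = lp := by linear_combination hGp - hlp
  replace hGm : -G χm = lm := by linear_combination hGm - hlm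
  have hGp' : 2 * G χp = -(2 * lp) := by linear_combination -2 * hGp
  have hGm' : 2 * G χm = -(2 * lm) := by linear_combination -2 * hGm
  refine ⟨⟨hGp, by rw [hPp], by linear_combination hGp'⟩,
    ⟨hGm, by rw [hPm, neg_neg], by linear_combination hGm'⟩, fun k => ⟨?_, ?_⟩⟩
  · rw [charpoly_lowerTriangular_fin_three, hGp, hPp, hGp']
    simp only [map_neg]
    ring
  · rw [charpoly_lowerTriangular_fin_three, hGm, hPm, hGm']
    simp only [map_neg]
    ring

/-- With `G(z) = −|b|·sgn(β)·z + c`,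
`P(z) = |b|·sgn(β)·z² − (c−γ)z − |β|·sgn(b)`, `λ± = −(c+γ)/2 ± √D/2` and
`χ± = sgn(β)((c−γ) ± √D)/(2|b|)` (`D = (c−γ)² + 4bβ > 0`): one has `−G(χ±) = λ±`,
`−P′(χ±) = ∓√D`, `2G(χ±) = −2λ±`, and for any `k` the block-triangular Jacobian of the
reduced desingularized flow at `p_{a,1,±}` has characteristic polynomial
`(X − λ±)(X − μ±)(X + 2λ±)` with `μ₊ = −√D`, `μ₋ = √D`. -/
theorem stmt_13 (b β c γ : ℝ) (hb : b ≠ 0) (hβ : β ≠ 0)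
    (D : ℝ) (hD : D = (c - γ) ^ 2 + 4 * b * β) (hDpos : 0 < D)
    (G P : ℝ → ℝ)
    (hG : ∀ z, G z = -|b| * Real.sign β * z + c)
    (hP : ∀ z, P z = |b| * Real.sign β * z ^ 2 - (c - γ) * z - |β| * Real.sign b)
    (lp lm χp χm : ℝ)
    (hlp : lp = -(c + γ) / 2 + Real.sqrt D / 2)
    (hlm : lm = -(c + γ) / 2 - Real.sqrt D / 2)
    (hχp : χp = Real.sign β * ((c - γ) + Real.sqrt D) / (2 * |b|))
    (hχm : χm = Real.sign β * ((c - γ) - Real.sqrt D) / (2 * |b|)) :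
    (-G χp = lp ∧ -(deriv P χp) = -Real.sqrt D ∧ 2 * G χp = -2 * lp) ∧
    (-G χm = lm ∧ -(deriv P χm) = Real.sqrt D ∧ 2 * G χm = -2 * lm) ∧
    (∀ k : ℝ,
      (!![-G χp, 0, 0; k, -(deriv P χp), 0; 0, 0, 2 * G χp] :
          Matrix (Fin 3) (Fin 3) ℝ).charpoly
        = (X - C lp) * (X - C (-Real.sqrt D)) * (X + C (2 * lp)) ∧
      (!![-G χm, 0, 0; k, -(deriv P χm), 0; 0, 0, 2 * G χm] :
          Matrix (Fin 3) (Fin 3) ℝ).charpoly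
        = (X - C lm) * (X - C (Real.sqrt D)) * (X + C (2 * lm))) :=
  stmt_13_general b β c γ hb hβ D G P hG hP lp lm χp χm hlp hlm hχp hχm
end

section
/- Let b, β, c, γ be real numbers with b ≠ 0 and β ≠ 0, let f : ℝ → ℝ be any function, and define F : ℝ³ → ℝ³ by F(x, w, z) = (c/|β| + sgn(β)·w, f(w)·(−|b|·z + |β|·x·w), sgn(b) + (γ/|b|)·w). Then for all (x, w, z) ∈ ℝ³: F(−x, w, −z) = (F₁(x,w,z), −F₂(x,w,z), F₃(x,w,z)). Consequently, if ψ(t) = (x(t), w(t), z(t)) satisfies ψ′(t) = F(ψ(t)) on an interval I, then the curve t ↦ (−x(−t), w(−t), −z(−t)) satisfies the same differential equation on −I; i.e. the system is time-reversible with respect to the symmetry (x, w, z, t) ↦ (−x, w, −z, −t). -/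
/-!
The field `F` is even in `(x, z)` in its first and third components and odd in its second,
so `F ∘ R = -(R ∘ F)` for the reflection `R (x, w, z) = (-x, w, -z)`. For any such linear `R`,
differentiating `s ↦ R (ψ (-s))` by the chain rule gives `-R (F (ψ (-s))) = F (R (ψ (-s)))`.
-/

def IsTimeReversible {E : Type*} [NormedAddCommGroup E] [NormedSpace ℝ E]
    (R : E →L[ℝ] E) (F : E → E) : Prop :=
  ∀ p, F (R p) = -R (F p)

theorem IsTimeReversible.hasDerivAt_comp_neg {E : Type*} [NormedAddCommGroup E]
    [NormedSpace ℝ E] {R : E →L[ℝ] E} {F : E → E} (hF : IsTimeReversible R F)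
    {ψ : ℝ → E} {t : ℝ} (hψ : HasDerivAt ψ (F (ψ (-t))) (-t)) :
    HasDerivAt (fun s => R (ψ (-s))) (F (R (ψ (-t)))) t := by
  have hψ_neg : HasDerivAt (fun s => ψ (-s)) (-F (ψ (-t))) t := by
    simpa [Function.comp_def] using hψ.scomp t (hasDerivAt_neg' t)
  rw [hF, ← map_neg]
  exact R.hasFDerivAt.comp_hasDerivAt t hψ_neg

def xzReflection : ℝ × ℝ × ℝ →L[ℝ] ℝ × ℝ × ℝ :=
  (-1 : ℝ →L[ℝ] ℝ).prodMap ((1 : ℝ →L[ℝ] ℝ).prodMap (-1))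

@[simp]
theorem xzReflection_apply (p : ℝ × ℝ × ℝ) : xzReflection p = (-p.1, p.2.1, -p.2.2) := rfl

theorem isTimeReversible_xzReflection {F : ℝ × ℝ × ℝ → ℝ × ℝ × ℝ}
    (hF : ∀ x w z : ℝ,
      F (-x, w, -z) = ((F (x, w, z)).1, -(F (x, w, z)).2.1, (F (x, w, z)).2.2)) :
    IsTimeReversible xzReflection F := by
  rintro ⟨x, w, z⟩
  simp [hF]

theorem stmt_14_general (b β c γ : ℝ) (f : ℝ → ℝ)
    (F : ℝ × ℝ × ℝ → ℝ × ℝ × ℝ)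
    (hF : ∀ x w z : ℝ, F (x, w, z) =
      (c / |β| + Real.sign β * w, f w * (-|b| * z + |β| * x * w),
        Real.sign b + (γ / |b|) * w)) :
    (∀ x w z : ℝ,
      F (-x, w, -z) = ((F (x, w, z)).1, -(F (x, w, z)).2.1, (F (x, w, z)).2.2)) ∧
    (∀ (I : Set ℝ) (ψ : ℝ → ℝ × ℝ × ℝ),
      (∀ t ∈ I, HasDerivAt ψ (F (ψ t)) t) →
      ∀ t : ℝ, -t ∈ I →
        HasDerivAt (fun s : ℝ => ((-(ψ (-s)).1, (ψ (-s)).2.1, -(ψ (-s)).2.2) : ℝ × ℝ × ℝ))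
          (F (-(ψ (-t)).1, (ψ (-t)).2.1, -(ψ (-t)).2.2)) t) := by
  have hsymm : ∀ x w z : ℝ,
      F (-x, w, -z) = ((F (x, w, z)).1, -(F (x, w, z)).2.1, (F (x, w, z)).2.2) := by
    intro x w z
    simp only [hF, Prod.mk.injEq, true_and, and_true]
    ring
  exact ⟨hsymm, fun I ψ hψ t ht =>
    (isTimeReversible_xzReflection hsymm).hasDerivAt_comp_neg (hψ (-t) ht)⟩

/-- The blown-up vector field
`F(x,w,z) = (c/|β| + sgn(β)w, f(w)(−|b|z + |β|xw), sgn(b) + (γ/|b|)w)` satisfies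
`F(−x, w, −z) = (F₁(x,w,z), −F₂(x,w,z), F₃(x,w,z))`; hence if `ψ` solves `ψ′ = F(ψ)`
on an interval `I`, then `t ↦ (−x(−t), w(−t), −z(−t))` solves the same equation on `−I`:
the system is time-reversible under `(x,w,z,t) ↦ (−x,w,−z,−t)`. -/
theorem stmt_14 (b β c γ : ℝ) (hb : b ≠ 0) (hβ : β ≠ 0) (f : ℝ → ℝ)
    (F : ℝ × ℝ × ℝ → ℝ × ℝ × ℝ)
    (hF : ∀ x w z : ℝ, F (x, w, z) =
      (c / |β| + Real.sign β * w, f w * (-|b| * z + |β| * x * w),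
        Real.sign b + (γ / |b|) * w)) :
    (∀ x w z : ℝ,
      F (-x, w, -z) = ((F (x, w, z)).1, -(F (x, w, z)).2.1, (F (x, w, z)).2.2)) ∧
    (∀ (I : Set ℝ) (ψ : ℝ → ℝ × ℝ × ℝ),
      (∀ t ∈ I, HasDerivAt ψ (F (ψ t)) t) →
      ∀ t : ℝ, -t ∈ I →
        HasDerivAt (fun s : ℝ => ((-(ψ (-s)).1, (ψ (-s)).2.1, -(ψ (-s)).2.2) : ℝ × ℝ × ℝ))
          (F (-(ψ (-t)).1, (ψ (-t)).2.1, -(ψ (-t)).2.2)) t) :=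
  stmt_14_general b β c γ f F hF
end
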